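/- If x is a best response to y in each factor game in the sense that x¹ is a best response to y¹ in (A¹,B¹) and x² is a best response to y² in (A²,B²), then the product strategy x (with x_{[i₁,i₂]} = x¹_{i₁}x²_{i₂}) is a best response to the product strategy y in the product game. -/
import Mathlib


open Finset

def IsStochastic {I : Type*} [Fintype I] (x : I → ℝ) : Prop :=
  (∀ i, 0 ≤ x i) ∧ ∑ i, x i = 1

def payoff {I J : Type*} [Fintype I] [Fintype J]
    (A : Matrix I J ℝ) (x : I → ℝ) (y : J → ℝ) : ℝ :=
  ∑ i, ∑ j, x i * A i j * y j

def IsBestResponse {I J : Type*} [Fintype I] [Fintype J]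
    (A : Matrix I J ℝ) (x : I → ℝ) (y : J → ℝ) : Prop :=
  ∀ x', IsStochastic x' → payoff A x' y ≤ payoff A x y

def IsNash {I J : Type*} [Fintype I] [Fintype J]
    (A B : Matrix I J ℝ) (x : I → ℝ) (y : J → ℝ) : Prop :=
  IsStochastic x ∧ IsStochastic y ∧
  (∀ x', IsStochastic x' → payoff A x' y ≤ payoff A x y) ∧
  (∀ y', IsStochastic y' → payoff B x y' ≤ payoff B x y)

def prodGame {I₁ J₁ I₂ J₂ : Type*} (A1 : Matrix I₁ J₁ ℝ) (A2 : Matrix I₂ J₂ ℝ) :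
    Matrix (I₁ × I₂) (J₁ × J₂) ℝ :=
  fun i j => A1 i.1 j.1 + A2 i.2 j.2

def sumGame {I₁ J₁ I₂ J₂ : Type*} (A1 : Matrix I₁ J₁ ℝ) (A2 : Matrix I₂ J₂ ℝ) (c : ℝ) :
    Matrix (I₁ ⊕ I₂) (J₁ ⊕ J₂) ℝ :=
  fun i j => match i, j with
  | Sum.inl i, Sum.inl j => A1 i j
  | Sum.inr i, Sum.inr j => A2 i j
  | _, _ => c

def IsPureNash {I J : Type*} (A B : Matrix I J ℝ) (i : I) (j : J) : Prop :=
  (∀ k, A k j ≤ A i j) ∧ (∀ l, B i l ≤ B i j)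


lemma payoff_prod_split {n₁ m₁ n₂ m₂ : ℕ}
    (A1 : Matrix (Fin n₁) (Fin m₁) ℝ) (A2 : Matrix (Fin n₂) (Fin m₂) ℝ)
    (x' : Fin n₁ × Fin n₂ → ℝ) (y1 : Fin m₁ → ℝ) (y2 : Fin m₂ → ℝ)
    (hy1 : ∑ j, y1 j = 1) (hy2 : ∑ j, y2 j = 1) :
    payoff (prodGame A1 A2) x' (fun j => y1 j.1 * y2 j.2)
      = payoff A1 (fun i1 => ∑ i2, x' (i1, i2)) y1
        + payoff A2 (fun i2 => ∑ i1, x' (i1, i2)) y2 := by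
  unfold payoff prodGame
  simp only [Fintype.sum_prod_type]
  have step : ∀ i1 i2,
      ∑ j1, ∑ j2, x' (i1, i2) * (A1 i1 j1 + A2 i2 j2) * (y1 j1 * y2 j2)
        = (∑ j1, x' (i1, i2) * A1 i1 j1 * y1 j1)
          + (∑ j2, x' (i1, i2) * A2 i2 j2 * y2 j2) := by
    intro i1 i2
    have : ∀ j1, ∑ j2, x' (i1, i2) * (A1 i1 j1 + A2 i2 j2) * (y1 j1 * y2 j2)
        = x' (i1, i2) * A1 i1 j1 * y1 j1 * (∑ j2, y2 j2)
          + y1 j1 * (∑ j2, x' (i1, i2) * A2 i2 j2 * y2 j2) := by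
      intro j1
      rw [Finset.mul_sum, Finset.mul_sum, ← Finset.sum_add_distrib]
      exact Finset.sum_congr rfl fun j2 _ => by ring
    simp only [this, hy2, mul_one, Finset.sum_add_distrib, ← Finset.sum_mul]
    rw [hy1, one_mul]
  simp only [step, Finset.sum_add_distrib]
  congr 1
  · refine Finset.sum_congr rfl fun i1 _ => ?_
    rw [Finset.sum_comm]
    refine Finset.sum_congr rfl fun j1 _ => ?_
    rw [Finset.sum_mul, Finset.sum_mul]
  · rw [Finset.sum_comm]
    refine Finset.sum_congr rfl fun i2 _ => ?_
    rw [Finset.sum_comm]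
    refine Finset.sum_congr rfl fun j2 _ => ?_
    rw [Finset.sum_mul, Finset.sum_mul]

theorem product_of_best_responses_is_best_response {n₁ m₁ n₂ m₂ : ℕ}
    (A1 : Matrix (Fin n₁) (Fin m₁) ℝ) (A2 : Matrix (Fin n₂) (Fin m₂) ℝ)
    (x1 : Fin n₁ → ℝ) (y1 : Fin m₁ → ℝ) (x2 : Fin n₂ → ℝ) (y2 : Fin m₂ → ℝ)
    (hx1 : IsStochastic x1) (hy1 : IsStochastic y1)
    (hx2 : IsStochastic x2) (hy2 : IsStochastic y2)
    (h1 : IsBestResponse A1 x1 y1) (h2 : IsBestResponse A2 x2 y2) :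
    IsBestResponse (prodGame A1 A2)
      (fun i => x1 i.1 * x2 i.2) (fun j => y1 j.1 * y2 j.2) := by
  intro x' hx'
  have hy1s := hy1.2
  have hy2s := hy2.2
  have hm1 : IsStochastic (fun i1 => ∑ i2, x' (i1, i2)) :=
    ⟨fun i1 => Finset.sum_nonneg fun i2 _ => hx'.1 _,
     by rw [← Fintype.sum_prod_type]; exact hx'.2⟩
  have hm2 : IsStochastic (fun i2 => ∑ i1, x' (i1, i2)) :=
    ⟨fun i2 => Finset.sum_nonneg fun i1 _ => hx'.1 _,
     by rw [Finset.sum_comm, ← Fintype.sum_prod_type]; exact hx'.2⟩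
  rw [payoff_prod_split A1 A2 x' y1 y2 hy1s hy2s,
      payoff_prod_split A1 A2 _ y1 y2 hy1s hy2s]
  have e1 : (fun i1 => ∑ i2, x1 i1 * x2 i2) = x1 := by
    funext i1; rw [← Finset.mul_sum, hx2.2, mul_one]
  have e2 : (fun i2 => ∑ i1, x1 i1 * x2 i2) = x2 := by
    funext i2; rw [← Finset.sum_mul, hx1.2, one_mul]
  rw [e1, e2]
  exact add_le_add (h1 _ hm1) (h2 _ hm2)
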